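/- arXiv:1901.09561 — 2 statements merged into one kernel-verified Lean document; each statement's English description precedes it below -/
import Mathlib

section
/- Operator bound from Fourier control: let W : ℝ^d → ℝ with ŵ ∈ L¹(ℝ^d), and let T be a self-adjoint trace-class operator on a bipartite Hilbert space L²(ℝ^d) ⊗ L²(ℝ^d) such that |tr[(A ⊗ B) T]| ≤ ε for all operators 0 ≤ A, B ≤ 1. Then |tr[W(x−y) T]| ≤ C ε ∫|ŵ(p)| dp for a universal constant C (e.g. C = 8), where W(x−y) acts as a multiplication operator. -/
/-!
Writing `f = f⁺ - f⁻` and `g = g⁺ - g⁻` extends the bound `ε` on tests `0 ≤ f, g ≤ 1` to the bound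
`4ε` on all measurable tests with `|f|, |g| ≤ 1`. Since
`cos ⟪p, x - y⟫ = cos ⟪p, x⟫ cos ⟪p, y⟫ + sin ⟪p, x⟫ sin ⟪p, y⟫`, each Fourier mode of `W (x - y)`
pairs with the kernel to at most `8ε`, and Fubini integrates this bound against `|ŵ|`.
-/

open MeasureTheory Real
open scoped RealInnerProductSpace

section ProductTests

variable {α β : Type*} [MeasurableSpace α] [MeasurableSpace β] {μ : Measure (α × β)}
  {k : α × β → ℝ} {ε : ℝ} {f : α → ℝ} {g : β → ℝ}

def BoundedOnProductTests (μ : Measure (α × β)) (k : α × β → ℝ) (ε : ℝ) : Prop :=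
  ∀ f : α → ℝ, ∀ g : β → ℝ, Measurable f → Measurable g →
    (∀ x, 0 ≤ f x) → (∀ x, f x ≤ 1) → (∀ y, 0 ≤ g y) → (∀ y, g y ≤ 1) →
    |∫ z, f z.1 * g z.2 * k z ∂μ| ≤ ε

lemma posPart_le_one_of_abs_le_one {a : ℝ} (h : |a| ≤ 1) : a⁺ ≤ 1 :=
  max_le (abs_le.mp h).2 zero_le_one

lemma negPart_le_one_of_abs_le_one {a : ℝ} (h : |a| ≤ 1) : a⁻ ≤ 1 :=
  max_le (neg_le.mpr (abs_le.mp h).1) zero_le_one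

lemma integrable_mul_mul_of_abs_le_one (hk : Integrable k μ) (hf : Measurable f)
    (hg : Measurable g) (hf1 : ∀ x, |f x| ≤ 1) (hg1 : ∀ y, |g y| ≤ 1) :
    Integrable (fun z => f z.1 * g z.2 * k z) μ :=
  hk.bdd_mul ((hf.comp measurable_fst).mul (hg.comp measurable_snd)).aestronglyMeasurable
    (ae_of_all _ fun z => by
      simpa only [norm_mul, Real.norm_eq_abs] using mul_le_one₀ (hf1 z.1) (abs_nonneg _) (hg1 z.2))

lemma abs_integral_mul_mul_le_two_mul (hk : Integrable k μ) (hT : BoundedOnProductTests μ k ε)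
    (hf : Measurable f) (hf0 : ∀ x, 0 ≤ f x) (hf1 : ∀ x, f x ≤ 1)
    (hg : Measurable g) (hg1 : ∀ y, |g y| ≤ 1) :
    |∫ z, f z.1 * g z.2 * k z ∂μ| ≤ 2 * ε := by
  have hfabs : ∀ x, |f x| ≤ 1 := fun x => (abs_of_nonneg (hf0 x)).trans_le (hf1 x)
  have hgpos : ∀ y, (g y)⁺ ≤ 1 := fun y => posPart_le_one_of_abs_le_one (hg1 y)
  have hgneg : ∀ y, (g y)⁻ ≤ 1 := fun y => negPart_le_one_of_abs_le_one (hg1 y)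
  have hsplit : ∫ z, f z.1 * g z.2 * k z ∂μ =
      ∫ z, f z.1 * (g z.2)⁺ * k z ∂μ - ∫ z, f z.1 * (g z.2)⁻ * k z ∂μ := by
    rw [← integral_sub (integrable_mul_mul_of_abs_le_one hk hf hg.posPart hfabs
        fun y => (abs_of_nonneg (posPart_nonneg _)).trans_le (hgpos y))
      (integrable_mul_mul_of_abs_le_one hk hf hg.negPart hfabs
        fun y => (abs_of_nonneg (negPart_nonneg _)).trans_le (hgneg y))]
    congr 1 with z
    conv_lhs => rw [← posPart_sub_negPart (g z.2)]
    ring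
  have hpos := hT f _ hf hg.posPart hf0 hf1 (fun y => posPart_nonneg _) hgpos
  have hneg := hT f _ hf hg.negPart hf0 hf1 (fun y => negPart_nonneg _) hgneg
  rw [hsplit]
  linarith [abs_sub (∫ z, f z.1 * (g z.2)⁺ * k z ∂μ) (∫ z, f z.1 * (g z.2)⁻ * k z ∂μ)]

lemma abs_integral_mul_mul_le_four_mul (hk : Integrable k μ) (hT : BoundedOnProductTests μ k ε)
    (hf : Measurable f) (hf1 : ∀ x, |f x| ≤ 1) (hg : Measurable g) (hg1 : ∀ y, |g y| ≤ 1) :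
    |∫ z, f z.1 * g z.2 * k z ∂μ| ≤ 4 * ε := by
  have hfpos : ∀ x, (f x)⁺ ≤ 1 := fun x => posPart_le_one_of_abs_le_one (hf1 x)
  have hfneg : ∀ x, (f x)⁻ ≤ 1 := fun x => negPart_le_one_of_abs_le_one (hf1 x)
  have hsplit : ∫ z, f z.1 * g z.2 * k z ∂μ =
      ∫ z, (f z.1)⁺ * g z.2 * k z ∂μ - ∫ z, (f z.1)⁻ * g z.2 * k z ∂μ := by
    rw [← integral_sub (integrable_mul_mul_of_abs_le_one hk hf.posPart hg
        (fun x => (abs_of_nonneg (posPart_nonneg _)).trans_le (hfpos x)) hg1)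
      (integrable_mul_mul_of_abs_le_one hk hf.negPart hg
        (fun x => (abs_of_nonneg (negPart_nonneg _)).trans_le (hfneg x)) hg1)]
    congr 1 with z
    conv_lhs => rw [← posPart_sub_negPart (f z.1)]
    ring
  have hpos := abs_integral_mul_mul_le_two_mul hk hT hf.posPart (fun x => posPart_nonneg _)
    hfpos hg hg1
  have hneg := abs_integral_mul_mul_le_two_mul hk hT hf.negPart (fun x => negPart_nonneg _)
    hfneg hg hg1
  rw [hsplit]
  linarith [abs_sub (∫ z, (f z.1)⁺ * g z.2 * k z ∂μ) (∫ z, (f z.1)⁻ * g z.2 * k z ∂μ)]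

end ProductTests

lemma abs_integral_cos_inner_sub_mul_le {E : Type*} [NormedAddCommGroup E]
    [InnerProductSpace ℝ E] [MeasurableSpace E] [OpensMeasurableSpace E] {μ : Measure (E × E)}
    {k : E × E → ℝ} {ε : ℝ}
    (hk : Integrable k μ) (hT : BoundedOnProductTests μ k ε) (p : E) :
    |∫ z, cos ⟪p, z.1 - z.2⟫ * k z ∂μ| ≤ 8 * ε := by
  have hcos : Measurable fun x : E => cos ⟪p, x⟫ := by fun_prop
  have hsin : Measurable fun x : E => sin ⟪p, x⟫ := by fun_prop
  have hcos1 : ∀ x : E, |cos ⟪p, x⟫| ≤ 1 := fun x => abs_cos_le_one _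
  have hsin1 : ∀ x : E, |sin ⟪p, x⟫| ≤ 1 := fun x => abs_sin_le_one _
  have hsplit : ∫ z, cos ⟪p, z.1 - z.2⟫ * k z ∂μ =
      ∫ z, cos ⟪p, z.1⟫ * cos ⟪p, z.2⟫ * k z ∂μ + ∫ z, sin ⟪p, z.1⟫ * sin ⟪p, z.2⟫ * k z ∂μ := by
    rw [← integral_add (integrable_mul_mul_of_abs_le_one hk hcos hcos hcos1 hcos1)
      (integrable_mul_mul_of_abs_le_one hk hsin hsin hsin1 hsin1)]
    congr 1 with z
    rw [inner_sub_right, cos_sub]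
    ring
  rw [hsplit]
  linarith [abs_add_le (∫ z, cos ⟪p, z.1⟫ * cos ⟪p, z.2⟫ * k z ∂μ)
      (∫ z, sin ⟪p, z.1⟫ * sin ⟪p, z.2⟫ * k z ∂μ),
    abs_integral_mul_mul_le_four_mul hk hT hcos hcos1 hcos hcos1,
    abs_integral_mul_mul_le_four_mul hk hT hsin hsin1 hsin hsin1]

lemma abs_integral_integral_mul_le {P Z : Type*} [MeasurableSpace P] [MeasurableSpace Z]
    {ν : Measure P} {μ : Measure Z} [SFinite ν] [SFinite μ] {w : P → ℝ} {k : Z → ℝ}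
    {φ : P → Z → ℝ} {C : ℝ} (hw : Integrable w ν) (hk : Integrable k μ)
    (hφ : Measurable (Function.uncurry φ)) (hφ1 : ∀ p z, |φ p z| ≤ 1)
    (hC : ∀ p, |∫ z, φ p z * k z ∂μ| ≤ C) :
    |∫ z, (∫ p, w p * φ p z ∂ν) * k z ∂μ| ≤ C * ∫ p, |w p| ∂ν := by
  have hint : Integrable (Function.uncurry fun z p => w p * (φ p z * k z)) (μ.prod ν) := by
    refine ((hk.mul_prod hw).bdd_mul (c := 1) (hφ.comp measurable_swap).aestronglyMeasurable
      (ae_of_all _ fun q => hφ1 q.2 q.1)).congr (ae_of_all _ fun q => ?_)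
    simp only [Function.uncurry, Function.comp, Prod.fst_swap, Prod.snd_swap]
    ring
  calc |∫ z, (∫ p, w p * φ p z ∂ν) * k z ∂μ|
      = |∫ p, w p * ∫ z, φ p z * k z ∂μ ∂ν| := by
        simp_rw [← integral_mul_const, mul_assoc, ← integral_const_mul]
        rw [integral_integral_swap hint]
    _ ≤ ∫ p, |w p| * C ∂ν :=
        (Real.norm_eq_abs _).symm.trans_le <| norm_integral_le_of_norm_le (hw.abs.mul_const C)
          (ae_of_all _ fun p => by
            simpa only [norm_mul, Real.norm_eq_abs] using
              mul_le_mul_of_nonneg_left (hC p) (abs_nonneg (w p)))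
    _ = C * ∫ p, |w p| ∂ν := by rw [integral_mul_const, mul_comm]

/-- The trace-class operator `T` is represented by its integral kernel density `k`, so that
`tr[(A ⊗ B) T] = ∫ f(x) g(y) k(x,y)` for multiplication operators `A = f`, `B = g`, and
`tr[W(x-y) T] = ∫ W(x-y) k(x,y)`. -/
theorem operator_bound_from_fourier_control_general {d : ℕ}
    (W : EuclideanSpace ℝ (Fin d) → ℝ)
    (wF : EuclideanSpace ℝ (Fin d) → ℝ) (hwFint : Integrable wF)
    (hW : ∀ z, W z = ∫ p, wF p * Real.cos ⟪p, z⟫)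
    (k : EuclideanSpace ℝ (Fin d) × EuclideanSpace ℝ (Fin d) → ℝ)
    (hk : Integrable k)
    (ε : ℝ)
    (htest : ∀ f g : EuclideanSpace ℝ (Fin d) → ℝ, Measurable f → Measurable g →
      (∀ x, 0 ≤ f x) → (∀ x, f x ≤ 1) → (∀ x, 0 ≤ g x) → (∀ x, g x ≤ 1) →
      |∫ z, f z.1 * g z.2 * k z| ≤ ε) :
    |∫ z, W (z.1 - z.2) * k z| ≤ 8 * ε * ∫ p, |wF p| := by
  simp_rw [hW]
  exact abs_integral_integral_mul_le hwFint hk (by fun_prop) (fun p z => abs_cos_le_one _)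
    (abs_integral_cos_inner_sub_mul_le hk htest)

/-- Operator bound from Fourier control. The self-adjoint trace-class operator `T` is
represented by its real integral kernel density `k` on `ℝ^d × ℝ^d`, so that
`tr[(A ⊗ B) T] = ∫ f(x) g(y) k(x,y)` for multiplication operators `A = f`, `B = g`, and
`tr[W(x-y) T] = ∫ W(x-y) k(x,y)`. -/
theorem operator_bound_from_fourier_control {d : ℕ}
    (W : EuclideanSpace ℝ (Fin d) → ℝ)
    (wF : EuclideanSpace ℝ (Fin d) → ℝ) (hwFint : Integrable wF)
    (hW : ∀ z, W z = ∫ p, wF p * Real.cos ⟪p, z⟫)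
    (k : EuclideanSpace ℝ (Fin d) × EuclideanSpace ℝ (Fin d) → ℝ)
    (hk : Integrable k)
    (ε : ℝ) (hε : 0 ≤ ε)
    (htest : ∀ f g : EuclideanSpace ℝ (Fin d) → ℝ, Measurable f → Measurable g →
      (∀ x, 0 ≤ f x) → (∀ x, f x ≤ 1) → (∀ x, 0 ≤ g x) → (∀ x, g x ≤ 1) →
      |∫ z, f z.1 * g z.2 * k z| ≤ ε) :
    |∫ z, W (z.1 - z.2) * k z| ≤ 8 * ε * ∫ p, |wF p| :=
  operator_bound_from_fourier_control_general W wF hwFint hW k hk ε htest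
end

section
/- Identification of measures by two-body marginals: let μ be a Borel probability measure on density matrices of a separable Hilbert space H and ν a Borel probability measure on unit vectors of H such that ∫ γ^{⊗2} dμ(γ) = ∫ |u^{⊗2}⟩⟨u^{⊗2}| dν(u) as trace-class operators on H ⊗ H (tested against all A₁ ⊗ A₂ with A₁, A₂ compact). Then μ is supported on pure states, i.e. μ-almost every γ is a rank-one projection |u⟩⟨u|. -/
set_option linter.unusedSectionVars false
set_option maxHeartbeats 1000000

open MeasureTheory Finset
open scoped InnerProductSpace ComplexConjugate

section HMAux

variable {H : Type*} [NormedAddCommGroup H] [InnerProductSpace ℂ H] [CompleteSpace H]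

/-- Cauchy–Schwarz for the positive sesquilinear form `(x,y) ↦ ⟪x, γ y⟫`. -/
lemma hm_cs (γ : H →L[ℂ] H)
    (hpos : ∀ x : H, 0 ≤ (⟪x, γ x⟫_ℂ).re)
    (hsa : ∀ x y : H, ⟪x, γ y⟫_ℂ = ⟪γ x, y⟫_ℂ) (x y : H) :
    ‖⟪x, γ y⟫_ℂ‖ ^ 2 ≤ (⟪x, γ x⟫_ℂ).re * (⟪y, γ y⟫_ℂ).re := by
  have hherm : ∀ a b : H, ⟪b, γ a⟫_ℂ = conj ⟪a, γ b⟫_ℂ := by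
    intro a b; rw [hsa a b, inner_conj_symm]
  by_cases h0 : ⟪x, γ y⟫_ℂ = 0
  · simp [h0]; exact mul_nonneg (hpos x) (hpos y)
  set B : ℝ := ‖⟪x, γ y⟫_ℂ‖ with hB
  have hBpos : 0 < B := norm_pos_iff.2 h0
  set c : ℂ := conj (⟪x, γ y⟫_ℂ) / B with hc
  have hcz : c * ⟪x, γ y⟫_ℂ = (B : ℂ) := by
    rw [hc, div_mul_eq_mul_div, mul_comm, Complex.mul_conj', ← hB, sq,
      mul_div_assoc, div_self (by exact_mod_cast hBpos.ne'), mul_one]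
  have hcnorm : ‖c‖ = 1 := by
    rw [hc, norm_div, RCLike.norm_conj, Complex.norm_real, ← hB,
      Real.norm_of_nonneg hBpos.le, div_self hBpos.ne']
  have key : ∀ t : ℝ, 0 ≤ (⟪x, γ x⟫_ℂ).re * (t * t) + (2 * B) * t + (⟪y, γ y⟫_ℂ).re := by
    intro t
    have h := hpos ((t : ℂ) • x + c • y)
    have hexp : ⟪(t : ℂ) • x + c • y, γ ((t : ℂ) • x + c • y)⟫_ℂ
        = (t : ℂ) * (t : ℂ) * ⟪x, γ x⟫_ℂ + ((t : ℂ) * (c * ⟪x, γ y⟫_ℂ)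
          + (t : ℂ) * conj (c * ⟪x, γ y⟫_ℂ)) + (conj c * c) * ⟪y, γ y⟫_ℂ := by
      simp only [map_add, _root_.map_smul, inner_add_left, inner_add_right,
        inner_smul_left, inner_smul_right, Complex.conj_ofReal, map_mul, ContinuousLinearMap.map_smul,
        ← hherm x y]
      ring
    rw [hexp, hcz] at h
    have hcc : conj c * c = 1 := by
      rw [Complex.conj_mul']
      rw [hcnorm]; norm_num
    rw [hcc] at h
    simp only [Complex.add_re, Complex.mul_re, Complex.conj_ofReal, Complex.one_re,
      Complex.one_im, Complex.mul_im, Complex.ofReal_re, Complex.ofReal_im, one_mul, zero_mul,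
      mul_zero, sub_zero, zero_sub, add_zero, zero_add] at h
    linarith
  have hd := discrim_le_zero key
  rw [discrim] at hd
  nlinarith [hd]

lemma hm_diag_le (e : HilbertBasis ℕ ℂ H) (γ : H →L[ℂ] H)
    (hpos : ∀ x : H, 0 ≤ (⟪x, γ x⟫_ℂ).re)
    (hsa : ∀ x y : H, ⟪x, γ y⟫_ℂ = ⟪γ x, y⟫_ℂ)
    (htr : HasSum (fun i => ⟪e i, γ (e i)⟫_ℂ) 1) (x : H) :
    (⟪x, γ x⟫_ℂ).re ≤ ‖x‖ ^ 2 := by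
  set d : ℕ → ℝ := fun i => (⟪e i, γ (e i)⟫_ℂ).re with hd
  have hdsum : HasSum d 1 := by
    have := htr.mapL Complex.reCLM
    simpa [hd] using this
  have hdnn : ∀ i, 0 ≤ d i := fun i => hpos (e i)
  set c : ℕ → ℂ := fun i => ⟪e i, x⟫_ℂ with hc
  have hxsum : HasSum (fun i => c i • e i) x := by
    have := e.hasSum_repr x
    simpa [hc, e.repr_apply_apply] using this
  have hq : Continuous fun z : H => (⟪z, γ z⟫_ℂ).re :=
    Complex.continuous_re.comp (continuous_id.inner (γ.continuous))
  have htend : Filter.Tendsto (fun F : Finset ℕ => (⟪∑ i ∈ F, c i • e i,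
      γ (∑ i ∈ F, c i • e i)⟫_ℂ).re) Filter.atTop (nhds ((⟪x, γ x⟫_ℂ).re)) :=
    (hq.continuousAt.tendsto.comp hxsum)
  refine le_of_tendsto htend (Filter.Eventually.of_forall fun F => ?_)
  -- bound each partial sum
  have hexp : (⟪∑ i ∈ F, c i • e i, γ (∑ i ∈ F, c i • e i)⟫_ℂ)
      = ∑ i ∈ F, ∑ k ∈ F, conj (c i) * c k * ⟪e i, γ (e k)⟫_ℂ := by
    rw [map_sum, sum_inner, Finset.sum_congr rfl]
    intro i _
    rw [inner_smul_left, inner_sum, Finset.mul_sum, Finset.sum_congr rfl]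
    intro k _
    rw [ContinuousLinearMap.map_smul, inner_smul_right]
    ring
  have hbound : ∀ i k, ‖⟪e i, γ (e k)⟫_ℂ‖ ≤ Real.sqrt (d i) * Real.sqrt (d k) := by
    intro i k
    have h1 := hm_cs γ hpos hsa (e i) (e k)
    have : ‖⟪e i, γ (e k)⟫_ℂ‖ ^ 2 ≤ (Real.sqrt (d i) * Real.sqrt (d k)) ^ 2 := by
      rw [mul_pow, Real.sq_sqrt (hdnn i), Real.sq_sqrt (hdnn k)]
      exact h1
    have h2 : ‖⟪e i, γ (e k)⟫_ℂ‖ ≤ Real.sqrt ((Real.sqrt (d i) * Real.sqrt (d k)) ^ 2) := by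
      rw [← Real.sqrt_sq (norm_nonneg (⟪e i, γ (e k)⟫_ℂ))]
      exact Real.sqrt_le_sqrt this
    rwa [Real.sqrt_sq (by positivity)] at h2
  calc (⟪∑ i ∈ F, c i • e i, γ (∑ i ∈ F, c i • e i)⟫_ℂ).re
      ≤ ‖(⟪∑ i ∈ F, c i • e i, γ (∑ i ∈ F, c i • e i)⟫_ℂ)‖ := Complex.re_le_norm _
    _ ≤ ∑ i ∈ F, ∑ k ∈ F, ‖c i‖ * ‖c k‖ * ‖⟪e i, γ (e k)⟫_ℂ‖ := by
        rw [hexp]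
        refine (norm_sum_le _ _).trans (Finset.sum_le_sum fun i _ => ?_)
        refine (norm_sum_le _ _).trans (Finset.sum_le_sum fun k _ => ?_)
        simp [norm_mul]
    _ ≤ ∑ i ∈ F, ∑ k ∈ F, (‖c i‖ * Real.sqrt (d i)) * (‖c k‖ * Real.sqrt (d k)) := by
        refine Finset.sum_le_sum fun i _ => Finset.sum_le_sum fun k _ => ?_
        have := hbound i k
        have h1 : 0 ≤ ‖c i‖ * ‖c k‖ := by positivity
        nlinarith [norm_nonneg (c i), norm_nonneg (c k)]
    _ = (∑ i ∈ F, ‖c i‖ * Real.sqrt (d i)) ^ 2 := by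
        rw [sq, Finset.sum_mul_sum]
    _ ≤ (∑ i ∈ F, ‖c i‖ ^ 2) * (∑ i ∈ F, Real.sqrt (d i) ^ 2) :=
        Finset.sum_mul_sq_le_sq_mul_sq F _ _
    _ ≤ ‖x‖ ^ 2 * 1 := by
        refine mul_le_mul ?_ ?_ (by positivity) (by positivity)
        · simpa [hc] using e.orthonormal.sum_inner_products_le x (s := F)
        · calc ∑ i ∈ F, Real.sqrt (d i) ^ 2 = ∑ i ∈ F, d i := by
                refine Finset.sum_congr rfl fun i _ => Real.sq_sqrt (hdnn i)
            _ ≤ 1 := sum_le_hasSum F (fun i _ => hdnn i) hdsum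
    _ = ‖x‖ ^ 2 := mul_one _

lemma hm_pure (e : HilbertBasis ℕ ℂ H) (γ : H →L[ℂ] H)
    (hpos : ∀ x : H, 0 ≤ (⟪x, γ x⟫_ℂ).re)
    (hsa : ∀ x y : H, ⟪x, γ y⟫_ℂ = ⟪γ x, y⟫_ℂ)
    (htr : HasSum (fun i => ⟪e i, γ (e i)⟫_ℂ) 1)
    (hfac : ∀ x y : H, ⟪x, γ x⟫_ℂ * ⟪y, γ y⟫_ℂ = ⟪x, γ y⟫_ℂ * ⟪y, γ x⟫_ℂ) :
    ∃ u : H, ‖u‖ = 1 ∧ γ = (innerSL ℂ u).smulRight u := by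
  have hherm : ∀ a b : H, ⟪b, γ a⟫_ℂ = conj ⟪a, γ b⟫_ℂ := by
    intro a b; rw [hsa a b, inner_conj_symm]
  -- find a vector with positive diagonal
  have hvex : ∃ i : ℕ, ⟪e i, γ (e i)⟫_ℂ ≠ 0 := by
    by_contra hcon
    push_neg at hcon
    have hfe : (fun i : ℕ => ⟪e i, γ (e i)⟫_ℂ) = fun _ => (0 : ℂ) := funext hcon
    rw [hfe] at htr
    exact one_ne_zero (htr.unique hasSum_zero)
  obtain ⟨i0, hi0⟩ := hvex
  set v : H := e i0 with hv
  set cc : ℂ := ⟪v, γ v⟫_ℂ with hcc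
  have hccre : cc = (cc.re : ℂ) := by
    have h : cc = conj cc := hherm v v
    exact (Complex.conj_eq_iff_re.mp h.symm).symm
  have hcrepos : 0 < cc.re := lt_of_le_of_ne (hpos v) (by
    intro h
    exact hi0 (by rw [← hcc] at *; rw [hccre, ← h]; simp))
  -- full factorization
  have hfull : ∀ x y : H, cc * ⟪x, γ y⟫_ℂ = ⟪v, γ y⟫_ℂ * ⟪x, γ v⟫_ℂ := by
    intro x y
    set w : H := cc • y - ⟪v, γ y⟫_ℂ • v with hw
    have hvw : ⟪v, γ w⟫_ℂ = 0 := by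
      rw [hw]; simp only [map_sub, _root_.map_smul, inner_sub_right, inner_smul_right]
      rw [← hcc]; ring
    have hww : ⟪w, γ w⟫_ℂ = 0 := by
      have h := hfac v w
      rw [hvw, ← hcc] at h
      have hwv : ⟪w, γ v⟫_ℂ = 0 := by rw [hherm, hvw, map_zero]
      rw [hwv] at h
      simp only [mul_zero, zero_mul] at h
      -- h : cc * ⟪w, γ w⟫ = 0
      rcases mul_eq_zero.mp h with h' | h'
      · exact absurd h' (by
          intro hz
          rw [hccre] at hz
          exact hcrepos.ne' (by exact_mod_cast hz))
      · exact h'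
    have hxw : ⟪x, γ w⟫_ℂ = 0 := by
      have h := hm_cs γ hpos hsa x w
      have hre : (⟪w, γ w⟫_ℂ).re = 0 := by rw [hww]; simp
      rw [hre, mul_zero] at h
      have h2 : ‖⟪x, γ w⟫_ℂ‖ ^ 2 = 0 := le_antisymm h (sq_nonneg _)
      exact norm_eq_zero.mp (sq_eq_zero_iff.mp h2)
    have hexp : ⟪x, γ w⟫_ℂ = cc * ⟪x, γ y⟫_ℂ - ⟪v, γ y⟫_ℂ * ⟪x, γ v⟫_ℂ := by
      rw [hw]
      simp only [map_sub, _root_.map_smul, inner_sub_right, inner_smul_right]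
      try ring
    linear_combination hxw - hexp
  -- build u
  set r : ℝ := Real.sqrt cc.re with hr
  have hrpos : 0 < r := Real.sqrt_pos.mpr hcrepos
  set u : H := ((r⁻¹ : ℝ) : ℂ) • γ v with hu
  have hkey : ∀ x y : H, ⟪x, γ y⟫_ℂ = ⟪x, u⟫_ℂ * ⟪u, y⟫_ℂ := by
    intro x y
    have h1 : ⟪x, u⟫_ℂ = ((r⁻¹ : ℝ) : ℂ) * ⟪x, γ v⟫_ℂ := by
      rw [hu, inner_smul_right]
    have h2 : ⟪u, y⟫_ℂ = ((r⁻¹ : ℝ) : ℂ) * ⟪v, γ y⟫_ℂ := by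
      rw [hu, inner_smul_left, Complex.conj_ofReal, ← hsa]
    rw [h1, h2]
    have hrc : (r : ℂ) ≠ 0 := Complex.ofReal_ne_zero.mpr hrpos.ne'
    have hr2 : ((r⁻¹ : ℝ) : ℂ) * ((r⁻¹ : ℝ) : ℂ) * cc = 1 := by
      have hrr : r * r = cc.re := Real.mul_self_sqrt hcrepos.le
      rw [hccre, ← hrr]
      push_cast
      field_simp
    calc ⟪x, γ y⟫_ℂ = ((r⁻¹ : ℝ) : ℂ) * ((r⁻¹ : ℝ) : ℂ) * cc * ⟪x, γ y⟫_ℂ := by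
          rw [hr2]; ring
      _ = ((r⁻¹ : ℝ) : ℂ) * ⟪x, γ v⟫_ℂ * (((r⁻¹ : ℝ) : ℂ) * ⟪v, γ y⟫_ℂ) := by
          linear_combination ((r⁻¹ : ℝ) : ℂ) * ((r⁻¹ : ℝ) : ℂ) * hfull x y
  have hγ : γ = (innerSL ℂ u).smulRight u := by
    ext y
    apply ext_inner_left ℂ
    intro x
    rw [hkey x y]
    simp [inner_smul_right]
    ring
  refine ⟨u, ?_, hγ⟩
  -- norm of u
  have hs : HasSum (fun i => ⟪u, e i⟫_ℂ * ⟪e i, u⟫_ℂ) ⟪u, u⟫_ℂ :=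
    HilbertBasis.hasSum_inner_mul_inner e u u
  have hs' : HasSum (fun i => ⟪e i, γ (e i)⟫_ℂ) ⟪u, u⟫_ℂ := by
    convert hs using 1
    funext i
    rw [hkey (e i) (e i)]
    ring
  have huu : ⟪u, u⟫_ℂ = 1 := hs'.unique htr
  have hnorm2 : ‖u‖ ^ 2 = 1 := by
    have h : RCLike.re ⟪u, u⟫_ℂ = RCLike.re (1 : ℂ) := by rw [huu]
    rwa [inner_self_eq_norm_sq, RCLike.one_re] at h
  nlinarith [norm_nonneg u]

end HMAux

open scoped InnerProductSpace

/-- Identification of measures by two-body marginals (Hudson–Moody argument): if a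
probability measure `μ` on density operators and a probability measure `ν` on unit
vectors have the same two-body marginal `∫ γ^{⊗2} dμ = ∫ |u^{⊗2}⟩⟨u^{⊗2}| dν` — tested
against all operators `A₁ ⊗ A₂`, equivalently against all rank-one operators
`|y₁⟩⟨x₁| ⊗ |y₂⟩⟨x₂|` — then `μ` is supported on pure states. Here a density operator is
a positive self-adjoint operator `γ` with `tr γ = ∑_i ⟪e_i, γ e_i⟫ = 1` for a Hilbert
basis `(e_i)` of the separable space `H`. -/
theorem measure_identification_pure_states
    {H : Type*} [NormedAddCommGroup H] [InnerProductSpace ℂ H] [CompleteSpace H]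
    [TopologicalSpace.SeparableSpace H]
    [MeasurableSpace H] [BorelSpace H]
    [MeasurableSpace (H →L[ℂ] H)] [BorelSpace (H →L[ℂ] H)]
    (e : HilbertBasis ℕ ℂ H)
    (μ : Measure (H →L[ℂ] H)) [IsProbabilityMeasure μ]
    (hμpos : ∀ᵐ γ ∂μ, ∀ x : H, 0 ≤ (⟪x, γ x⟫_ℂ).re)
    (hμsa : ∀ᵐ γ ∂μ, ∀ x y : H, ⟪x, γ y⟫_ℂ = ⟪γ x, y⟫_ℂ)
    (hμtr : ∀ᵐ γ ∂μ, HasSum (fun i => ⟪e i, γ (e i)⟫_ℂ) 1)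
    (ν : Measure H) [IsProbabilityMeasure ν]
    (hν : ∀ᵐ u ∂ν, ‖u‖ = 1)
    (hmarg : ∀ x₁ y₁ x₂ y₂ : H,
      (∫ γ, ⟪x₁, γ y₁⟫_ℂ * ⟪x₂, γ y₂⟫_ℂ ∂μ) =
        ∫ u, ⟪x₁, u⟫_ℂ * ⟪u, y₁⟫_ℂ * ⟪x₂, u⟫_ℂ * ⟪u, y₂⟫_ℂ ∂ν) :
    ∀ᵐ γ ∂μ, ∃ u : H, ‖u‖ = 1 ∧ γ = (innerSL ℂ u).smulRight u := by
  classical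
  haveI : Nonempty H := ⟨0⟩
  set d : ℕ → H := TopologicalSpace.denseSeq H with hd
  have hdd : DenseRange d := TopologicalSpace.denseRange_denseSeq H
  -- continuity of evaluation
  have hev : ∀ x y : H, Continuous fun γ : H →L[ℂ] H => ⟪x, γ y⟫_ℂ := by
    intro x y
    exact Continuous.inner continuous_const ((ContinuousLinearMap.apply ℂ H y).continuous)
  -- key a.e. identity for fixed test vectors
  have key_ae : ∀ x y : H, ∀ᵐ γ ∂μ,
      ⟪x, γ x⟫_ℂ * ⟪y, γ y⟫_ℂ = ⟪x, γ y⟫_ℂ * ⟪y, γ x⟫_ℂ := by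
    intro x y
    set f : (H →L[ℂ] H) → ℂ := fun γ => ⟪x, γ x⟫_ℂ * ⟪y, γ y⟫_ℂ with hf
    set g : (H →L[ℂ] H) → ℂ := fun γ => ⟪x, γ y⟫_ℂ * ⟪y, γ x⟫_ℂ with hg
    have hfc : Continuous f := ((hev x x).mul (hev y y))
    have hgc : Continuous g := ((hev x y).mul (hev y x))
    -- pointwise structure on the good set
    have hstruct : ∀ᵐ γ ∂μ, f γ - g γ = (((f γ - g γ).re : ℝ) : ℂ)
        ∧ 0 ≤ (f γ - g γ).re := by
      filter_upwards [hμpos, hμsa] with γ h1 h2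
      have hherm : ∀ a b : H, ⟪b, γ a⟫_ℂ = conj ⟪a, γ b⟫_ℂ := fun a b => by
        rw [h2 a b, inner_conj_symm]
      have hdiag : ∀ a : H, ⟪a, γ a⟫_ℂ = ((⟪a, γ a⟫_ℂ).re : ℂ) := fun a =>
        (Complex.conj_eq_iff_re.mp (hherm a a).symm).symm
      have hgval : g γ = ((‖⟪x, γ y⟫_ℂ‖ ^ 2 : ℝ) : ℂ) := by
        show ⟪x, γ y⟫_ℂ * ⟪y, γ x⟫_ℂ = _
        rw [hherm x y, mul_comm, Complex.conj_mul']
        norm_cast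
      have hfval : f γ = (((⟪x, γ x⟫_ℂ).re * (⟪y, γ y⟫_ℂ).re : ℝ) : ℂ) := by
        show ⟪x, γ x⟫_ℂ * ⟪y, γ y⟫_ℂ = _
        conv_lhs => rw [hdiag x, hdiag y]
        norm_cast
      have hsub : f γ - g γ =
          (((⟪x, γ x⟫_ℂ).re * (⟪y, γ y⟫_ℂ).re - ‖⟪x, γ y⟫_ℂ‖ ^ 2 : ℝ) : ℂ) := by
        rw [hfval, hgval]; push_cast; ring
      have hnn : 0 ≤ (⟪x, γ x⟫_ℂ).re * (⟪y, γ y⟫_ℂ).re - ‖⟪x, γ y⟫_ℂ‖ ^ 2 := by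
        have := hm_cs γ h1 h2 x y; linarith
      constructor
      · rw [hsub, Complex.ofReal_re]
      · rw [hsub, Complex.ofReal_re]; exact hnn
    -- integrability
    have hfb : ∀ᵐ γ ∂μ, ‖f γ‖ ≤ ‖x‖ ^ 2 * ‖y‖ ^ 2 := by
      filter_upwards [hμpos, hμsa, hμtr] with γ h1 h2 h3
      have hherm : ∀ a b : H, ⟪b, γ a⟫_ℂ = conj ⟪a, γ b⟫_ℂ := fun a b => by
        rw [h2 a b, inner_conj_symm]
      have hdiag : ∀ a : H, ⟪a, γ a⟫_ℂ = ((⟪a, γ a⟫_ℂ).re : ℂ) := fun a =>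
        (Complex.conj_eq_iff_re.mp (hherm a a).symm).symm
      have hxx : ‖⟪x, γ x⟫_ℂ‖ ≤ ‖x‖ ^ 2 := by
        rw [hdiag x, Complex.norm_real, Real.norm_of_nonneg (h1 x)]
        exact hm_diag_le e γ h1 h2 h3 x
      have hyy : ‖⟪y, γ y⟫_ℂ‖ ≤ ‖y‖ ^ 2 := by
        rw [hdiag y, Complex.norm_real, Real.norm_of_nonneg (h1 y)]
        exact hm_diag_le e γ h1 h2 h3 y
      calc ‖f γ‖ = ‖⟪x, γ x⟫_ℂ‖ * ‖⟪y, γ y⟫_ℂ‖ := norm_mul _ _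
        _ ≤ ‖x‖ ^ 2 * ‖y‖ ^ 2 :=
            mul_le_mul hxx hyy (norm_nonneg _) (by positivity)
    have hgb : ∀ᵐ γ ∂μ, ‖g γ‖ ≤ ‖x‖ ^ 2 * ‖y‖ ^ 2 := by
      filter_upwards [hμpos, hμsa, hμtr] with γ h1 h2 h3
      have hb : ∀ a b : H, ‖⟪a, γ b⟫_ℂ‖ ≤ ‖a‖ * ‖b‖ := by
        intro a b
        have hcs := hm_cs γ h1 h2 a b
        have ha := hm_diag_le e γ h1 h2 h3 a
        have hbb := hm_diag_le e γ h1 h2 h3 b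
        nlinarith [norm_nonneg (⟪a, γ b⟫_ℂ), norm_nonneg a, norm_nonneg b,
          h1 a, h1 b, mul_nonneg (norm_nonneg a) (norm_nonneg b),
          sq_nonneg (‖⟪a, γ b⟫_ℂ‖ - ‖a‖ * ‖b‖)]
      calc ‖g γ‖ = ‖⟪x, γ y⟫_ℂ‖ * ‖⟪y, γ x⟫_ℂ‖ := norm_mul _ _
        _ ≤ (‖x‖ * ‖y‖) * (‖y‖ * ‖x‖) :=
            mul_le_mul (hb x y) (hb y x) (norm_nonneg _) (by positivity)
        _ = ‖x‖ ^ 2 * ‖y‖ ^ 2 := by ring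
    have hfi : Integrable f μ :=
      Integrable.mono' (integrable_const _) hfc.aestronglyMeasurable hfb
    have hgi : Integrable g μ :=
      Integrable.mono' (integrable_const _) hgc.aestronglyMeasurable hgb
    -- equality of integrals via the marginal hypothesis
    have hint : ∫ γ, f γ ∂μ = ∫ γ, g γ ∂μ := by
      have h1 := hmarg x x y y
      have h2 := hmarg x y y x
      rw [hf, hg]
      simp only
      rw [h1, h2]
      exact integral_congr_ae (Filter.EventuallyEq.of_eq (funext fun u => by ring))
    have hzero : ∫ γ, (f γ - g γ) ∂μ = 0 := by
      have h := integral_sub hfi hgi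
      rw [hint, sub_self] at h
      exact h
    -- pass to real parts
    have hre0 : ∫ γ, (f γ - g γ).re ∂μ = 0 := by
      have h := integral_re (hfi.sub hgi)
      simp only [Pi.sub_apply] at h
      rw [hzero] at h
      simpa using h
    have hnnae : 0 ≤ᵐ[μ] fun γ => (f γ - g γ).re :=
      hstruct.mono fun γ h => h.2
    have hred : Integrable (fun γ => (f γ - g γ).re) μ := by
      have := (hfi.sub hgi).re
      simpa using this
    have hae0 : (fun γ => (f γ - g γ).re) =ᵐ[μ] 0 :=
      (integral_eq_zero_iff_of_nonneg_ae hnnae hred).mp hre0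
    filter_upwards [hstruct, hae0] with γ hs h0
    have h1 : f γ - g γ = 0 := by
      rw [hs.1]
      rw [Pi.zero_apply] at h0
      rw [h0]
      simp
    have := sub_eq_zero.mp h1
    exact this
  -- countable family
  have hcount : ∀ᵐ γ ∂μ, ∀ n m : ℕ,
      ⟪d n, γ (d n)⟫_ℂ * ⟪d m, γ (d m)⟫_ℂ = ⟪d n, γ (d m)⟫_ℂ * ⟪d m, γ (d n)⟫_ℂ := by
    rw [MeasureTheory.ae_all_iff]
    intro n
    rw [MeasureTheory.ae_all_iff]
    intro m
    exact key_ae (d n) (d m)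
  filter_upwards [hμpos, hμsa, hμtr, hcount] with γ h1 h2 h3 h4
  refine hm_pure e γ h1 h2 h3 ?_
  -- extend by density
  have hc1 : Continuous fun p : H × H => ⟪p.1, γ p.1⟫_ℂ * ⟪p.2, γ p.2⟫_ℂ := by
    exact ((continuous_fst.inner (γ.continuous.comp continuous_fst)).mul
      (continuous_snd.inner (γ.continuous.comp continuous_snd)))
  have hc2 : Continuous fun p : H × H => ⟪p.1, γ p.2⟫_ℂ * ⟪p.2, γ p.1⟫_ℂ := by
    exact ((continuous_fst.inner (γ.continuous.comp continuous_snd)).mul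
      (continuous_snd.inner (γ.continuous.comp continuous_fst)))
  have hdense : DenseRange (fun nm : ℕ × ℕ => (d nm.1, d nm.2)) := hdd.prodMap hdd
  have heq : (fun p : H × H => ⟪p.1, γ p.1⟫_ℂ * ⟪p.2, γ p.2⟫_ℂ)
      = fun p : H × H => ⟪p.1, γ p.2⟫_ℂ * ⟪p.2, γ p.1⟫_ℂ := by
    refine Continuous.ext_on hdense hc1 hc2 ?_
    rintro p ⟨⟨n, m⟩, rfl⟩
    exact h4 n m
  intro a b
  exact congrFun heq (a, b)
end
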